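/- Given positive integers w₁,…,w_m, k, and B, there exists a partition I₁,…,I_k of {1,…,m} with max_{1≤i≤k} Σ_{j∈I_i} w_j ≤ B if and only if the temporal graph consisting of m vertices v₁,…,v_m, where v_j has exactly w_j self-loop temporal edges all with distinct availability times, admits a Substream index with k substreams of size at most B (i.e., there are subsets S₁,…,S_k of the edge set, each of cardinality at most B, and an assignment f of vertices to indices such that for every vertex v_j, the set ξ(v_j) of all edges usable by a temporal walk starting at v_j is contained in S_{f(v_j)}). -/

import Mathlib

/-- A temporal edge with tail, head, availability time and transition time. -/
structure TEdge (V : Type) where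
  tail : V
  head : V
  time : ℕ
  trans : ℕ
deriving DecidableEq

/-- `W` is a temporal walk starting at `v` using only edges from `E`. -/
def WalkFrom {V : Type} (E : Set (TEdge V)) (v : V) (W : List (TEdge V)) : Prop :=
  W ≠ [] ∧ (∀ e ∈ W, e ∈ E) ∧ (∀ e, W.head? = some e → e.tail = v) ∧
  W.Chain' (fun e f => e.head = f.tail ∧ e.time + e.trans ≤ f.time)

/-- `ξ(v)`: the set of edges usable by some temporal walk starting at `v`. -/
def xi {V : Type} (E : Set (TEdge V)) (v : V) : Set (TEdge V) :=
  {e | ∃ W, WalkFrom E v W ∧ e ∈ W}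

/-- The walk `W` ends at vertex `w`. -/
def EndsAt {V : Type} (W : List (TEdge V)) (w : V) : Prop :=
  W.getLast?.map TEdge.head = some w

/-- `W` is a temporal path from `v`: a walk visiting each vertex at most once. -/
def PathFrom {V : Type} (E : Set (TEdge V)) (v : V) (W : List (TEdge V)) : Prop :=
  WalkFrom E v W ∧ (v :: W.map TEdge.head).Nodup

/-- The duration of a temporal walk: arrival time minus starting time. -/
def duration {V : Type} (W : List (TEdge V)) : ℕ :=
  ((W.getLast?.map fun e => e.time + e.trans).getD 0) - ((W.head?.map TEdge.time).getD 0)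

/-- Minimum duration of a temporal path from `u` to `w` (`⊤` if unreachable). -/
noncomputable def tdist {V : Type} (E : Set (TEdge V)) (u w : V) : ℕ∞ :=
  sInf {d : ℕ∞ | ∃ W, PathFrom E u W ∧ EndsAt W w ∧ (duration W : ℕ∞) = d}

/-!
When every edge is a self-loop, a temporal walk never leaves its start vertex, so `ξ(v)` is
exactly the set of loops at `v`, of size `w v`. A substream index with assignment `f` therefore
must put all loops of the vertices sent to `i` into `S i`, which bounds the load of bin `i`
by `B`; conversely a packing `g` yields the index `S i := {loops at vertices of bin i}`.
-/

open Finset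

section SelfLoops

variable {V : Type} {E : Set (TEdge V)}

theorem WalkFrom.tail_eq_of_forall_loop (hloop : ∀ e ∈ E, e.tail = e.head) {v : V} :
    ∀ {W : List (TEdge V)}, WalkFrom E v W → ∀ e ∈ W, e.tail = v
  | [], _, e, he => absurd he List.not_mem_nil
  | a :: W, ⟨_, hmem, hhead, hchain⟩, e, he => by
    have ha : a.tail = v := hhead a rfl
    rcases List.mem_cons.mp he with rfl | he
    · exact ha
    · cases W with
      | nil => exact absurd he List.not_mem_nil
      | cons b W =>
        have hab := (List.isChain_cons_cons.mp hchain).1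
        have hb : b.tail = v := by rw [← hab.1, ← hloop a (hmem a List.mem_cons_self), ha]
        refine tail_eq_of_forall_loop hloop ⟨List.cons_ne_nil b W,
          fun x hx => hmem x (List.mem_cons_of_mem a hx), ?_, hchain.tail⟩ e he
        rintro x ⟨⟩
        exact hb

theorem xi_eq_of_forall_loop (hloop : ∀ e ∈ E, e.tail = e.head) (v : V) :
    xi E v = {e ∈ E | e.tail = v} := by
  ext e
  constructor
  · rintro ⟨W, hW, heW⟩
    exact ⟨hW.2.1 e heW, hW.tail_eq_of_forall_loop hloop e heW⟩
  · rintro ⟨heE, rfl⟩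
    refine ⟨[e], ⟨List.cons_ne_nil e [], ?_, ?_, List.isChain_singleton e⟩, List.mem_singleton_self e⟩
    · simpa using heE
    · rintro x ⟨⟩
      rfl

end SelfLoops

theorem binpacking_iff_substream_index_general (m k B : ℕ)
    (w : Fin m → ℕ)
    (E : Finset (TEdge (Fin m)))
    (hloop : ∀ e ∈ E, e.tail = e.head)
    (hwdeg : ∀ j : Fin m, (E.filter fun e => e.tail = j).card = w j) :
    (∃ g : Fin m → Fin k,
        ∀ i : Fin k, ∑ j ∈ Finset.univ.filter fun j => g j = i, w j ≤ B) ↔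
    (∃ (S : Fin k → Finset (TEdge (Fin m))) (f : Fin m → Fin k),
        (∀ i, S i ⊆ E ∧ (S i).card ≤ B) ∧
        ∀ j : Fin m, xi (E : Set (TEdge (Fin m))) j ⊆ (S (f j) : Set (TEdge (Fin m)))) := by
  have hxi := xi_eq_of_forall_loop (E := (E : Set (TEdge (Fin m)))) (by simpa using hloop)
  have hload : ∀ (g : Fin m → Fin k) (i : Fin k),
      ∑ j ∈ univ.filter fun j => g j = i, w j = #{e ∈ E | g e.tail = i} := fun g i => by
    simp_rw [← hwdeg, sum_card_fiberwise_eq_card_filter, mem_filter, mem_univ, true_and]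
  constructor
  · rintro ⟨g, hg⟩
    refine ⟨fun i => {e ∈ E | g e.tail = i}, g,
      fun i => ⟨filter_subset _ _, hload g i ▸ hg i⟩, fun j => ?_⟩
    rw [hxi]
    rintro e ⟨he, rfl⟩
    simpa using he
  · rintro ⟨S, f, hS, hsub⟩
    refine ⟨f, fun i => (hload f i).trans_le ((card_le_card ?_).trans (hS i).2)⟩
    intro e he
    obtain ⟨heE, rfl⟩ := mem_filter.mp he
    exact hsub e.tail (by rw [hxi]; exact ⟨heE, rfl⟩)

/-- Equivalence at the core of the NP-hardness reduction from UnaryBinPacking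
(Theorem 4.1): the items `w₁,…,w_m` can be partitioned into `k` bins of total
size at most `B` iff the temporal graph with `m` vertices where vertex `j` has
exactly `w j` self-loops, all edges having pairwise distinct availability times,
admits a Substream index with `k` substreams of size at most `B`. -/
theorem binpacking_iff_substream_index (m k B : ℕ) (hm : 0 < m) (hk : 0 < k)
    (w : Fin m → ℕ) (hw : ∀ j, 0 < w j)
    (E : Finset (TEdge (Fin m)))
    (hloop : ∀ e ∈ E, e.tail = e.head)
    (htimes : ∀ e ∈ E, ∀ e' ∈ E, e ≠ e' → e.time ≠ e'.time)
    (hwdeg : ∀ j : Fin m, (E.filter fun e => e.tail = j).card = w j) :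
    (∃ g : Fin m → Fin k,
        ∀ i : Fin k, ∑ j ∈ Finset.univ.filter fun j => g j = i, w j ≤ B) ↔
    (∃ (S : Fin k → Finset (TEdge (Fin m))) (f : Fin m → Fin k),
        (∀ i, S i ⊆ E ∧ (S i).card ≤ B) ∧
        ∀ j : Fin m, xi (E : Set (TEdge (Fin m))) j ⊆ (S (f j) : Set (TEdge (Fin m)))) :=
  binpacking_iff_substream_index_general m k B w E hloop hwdeg
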